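/- arXiv:2508.01458 — 2 statements merged into one kernel-verified Lean document; each statement's English description precedes it below -/
import Mathlib

section
/- There is a universal constant C > 0 such that for every N ∈ ℕ, z ∈ [0,1), every integer n > N z², and every L ∈ ℕ, |∑_{j=n+1}^{n+L} e^{2 i ϑ_{j,n}(z)}| ≤ C·√n·δ_n(z)·(1 + L³/n), where ϑ_{j,n}(z) := ∑_{k=n+1}^{j} θ_k(z). -/
open Real Finset
set_option maxHeartbeats 1000000

lemma auxA (t : ℝ) :
    ‖Complex.exp (2 * Complex.I * t) - 1‖ = 2 * |Real.sin t| := by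
  have h : (2 : ℂ) * Complex.I * t = ((2*t : ℝ) : ℂ) * Complex.I := by push_cast; ring
  rw [h, Complex.exp_mul_I, ← Complex.ofReal_cos, ← Complex.ofReal_sin]
  have h2 : (Real.cos (2*t) : ℂ) + (Real.sin (2*t) : ℂ) * Complex.I - 1
      = ((Real.cos (2*t) - 1 : ℝ) : ℂ) + ((Real.sin (2*t) : ℝ) : ℂ) * Complex.I := by
    push_cast; ring
  rw [h2, Complex.norm_add_mul_I]
  have h3 : (Real.cos (2*t) - 1)^2 + (Real.sin (2*t))^2 = (2 * Real.sin t)^2 := by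
    have := Real.sin_sq_add_cos_sq t
    rw [Real.cos_two_mul, Real.sin_two_mul]; nlinarith
  rw [h3, Real.sqrt_sq_eq_abs, abs_mul]
  simp

lemma auxB {a b : ℝ} (ha : 0 ≤ a) (hab : a ≤ b) (hb : b < 1) :
    Real.arccos a - Real.arccos b ≤ (π/2) * (b - a) / Real.sqrt (1 - b^2) := by
  have hb0 : 0 ≤ b := le_trans ha hab
  have ha1 : a < 1 := lt_of_le_of_lt hab hb
  set t := Real.arcsin b - Real.arcsin a with hteq
  have ht0 : 0 ≤ t := sub_nonneg.2 (Real.monotone_arcsin hab)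
  have ht2 : t ≤ π/2 := by
    have h1 := Real.arcsin_le_pi_div_two b
    have h2 := Real.arcsin_nonneg.2 ha
    simp only [hteq]; linarith
  have heq : Real.arccos a - Real.arccos b = t := by
    rw [Real.arccos_eq_pi_div_two_sub_arcsin, Real.arccos_eq_pi_div_two_sub_arcsin]
    simp only [hteq]; ring
  have key := Real.mul_le_sin ht0 ht2
  have hsin : Real.sin t = b * Real.sqrt (1 - a^2) - Real.sqrt (1 - b^2) * a := by
    rw [hteq, Real.sin_sub, Real.sin_arcsin (by linarith) (by linarith),
      Real.sin_arcsin (by linarith) (by linarith), Real.cos_arcsin, Real.cos_arcsin]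
  set u := Real.sqrt (1 - a^2) with hu
  set v := Real.sqrt (1 - b^2) with hv
  have hvpos : 0 < v := Real.sqrt_pos.2 (by nlinarith)
  have hu0 : 0 ≤ u := Real.sqrt_nonneg _
  have hu2 : u^2 = 1 - a^2 := Real.sq_sqrt (by nlinarith)
  have hv2 : v^2 = 1 - b^2 := Real.sq_sqrt (by nlinarith)
  have hab1 : a * b < 1 := by nlinarith
  have huv : u * v ≤ 1 - a * b := by nlinarith [sq_nonneg (u*v - (1 - a*b)), mul_nonneg hu0 hvpos.le, sq_nonneg (a - b)]
  have hfin : Real.sin t ≤ (b - a) / v := by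
    rw [le_div_iff₀ hvpos, hsin]
    nlinarith [mul_le_mul_of_nonneg_left huv hb0]
  have hπ : 0 < π := Real.pi_pos
  rw [heq]
  calc t ≤ (π/2) * Real.sin t := by
        have := mul_le_mul_of_nonneg_left key (le_of_lt (by positivity : (0:ℝ) < π/2))
        calc t = (π/2) * (2/π * t) := by field_simp
        _ ≤ (π/2) * Real.sin t := this
    _ ≤ (π/2) * ((b - a)/v) := by
        have : (0:ℝ) ≤ π/2 := by positivity
        exact mul_le_mul_of_nonneg_left hfin this
    _ = (π/2) * (b - a) / v := by ring

lemma auxD {p k w0 : ℝ} (hp : 1 ≤ p) (hpk : p ≤ k) (hw : 0 ≤ w0) (hwp : w0^2 ≤ p) :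
    w0/Real.sqrt p - w0/Real.sqrt k ≤ (k - p)/(2*p) := by
  set u := Real.sqrt k with hu
  set v := Real.sqrt p with hv
  have hp0 : (0:ℝ) < p := by linarith
  have hk0 : (0:ℝ) < k := by linarith
  have hv0 : 0 < v := Real.sqrt_pos.2 hp0
  have hu0 : 0 < u := Real.sqrt_pos.2 hk0
  have hv2 : v^2 = p := Real.sq_sqrt hp0.le
  have hu2 : u^2 = k := Real.sq_sqrt hk0.le
  have hvu : v ≤ u := Real.sqrt_le_sqrt hpk
  have hv1 : 1 ≤ v := by nlinarith
  have hwv : w0 ≤ v := by nlinarith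
  have hgoal : (k - p)/(2*p) = (u^2 - v^2)/(2*v^2) := by rw [hu2, hv2]
  rw [hgoal, div_sub_div _ _ (ne_of_gt hv0) (ne_of_gt hu0),
    div_le_div_iff₀ (by positivity) (by positivity)]
  have h2 : 0 ≤ v*u*(u+v) - 2*v^2*w0 := by nlinarith [mul_pos hv0 hu0, mul_pos hv0 hv0]
  nlinarith [mul_nonneg (sub_nonneg.2 hvu) h2]



/-- There is a universal constant `C > 0` such that for every `N ∈ ℕ`, `z ∈ [0,1)`,
every integer `n > N z²` and every `L ∈ ℕ`,
`|∑_{j=n+1}^{n+L} e^{2 i ϑ_{j,n}(z)}| ≤ C √n δ_n(z) (1 + L³/n)`, where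
`ϑ_{j,n}(z) = ∑_{k=n+1}^{j} arccos (z √(N/k))` and `δ_n(z) = (n - N z²)^{-1/2}`. -/
theorem stmt7 :
    ∃ C : ℝ, 0 < C ∧
      ∀ (N : ℕ) (z : ℝ), 0 ≤ z → z < 1 →
        ∀ n : ℕ, (N : ℝ) * z ^ 2 < n → ∀ L : ℕ,
          ‖∑ j ∈ Finset.Ioc n (n + L),
              Complex.exp (2 * Complex.I *
                ((∑ k ∈ Finset.Ioc n j, Real.arccos (z * Real.sqrt ((N : ℝ) / k)) : ℝ) : ℂ))‖ ≤
            C * Real.sqrt (n : ℝ) * (1 / Real.sqrt ((n : ℝ) - (N : ℝ) * z ^ 2)) *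
              (1 + (L : ℝ) ^ 3 / (n : ℝ)) := by
  refine ⟨8, by norm_num, ?_⟩
  intro N z hz0 hz1 n hc L
  set c : ℝ := (N : ℝ) * z ^ 2 with hcdef
  have hc0 : 0 ≤ c := by positivity
  have hn0 : (0:ℝ) < n := lt_of_le_of_lt hc0 hc
  have hnn : 0 < n := by exact_mod_cast hn0
  have hn1 : (1:ℝ) ≤ n := by exact_mod_cast hnn
  set θ : ℕ → ℝ := fun k => Real.arccos (z * Real.sqrt ((N : ℝ) / k)) with hθdef
  set x : ℕ → ℝ := fun k => z * Real.sqrt ((N : ℝ) / k) with hxdef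
  have hx0 : ∀ k : ℕ, 0 ≤ x k := fun k => mul_nonneg hz0 (Real.sqrt_nonneg _)
  have hxsq : ∀ k : ℕ, 0 < (k:ℝ) → (x k)^2 = c / k := by
    intro k hk
    have : (x k)^2 = z^2 * ((N:ℝ)/k) := by
      rw [hxdef]; simp only [mul_pow]
      rw [Real.sq_sqrt (by positivity)]
    rw [this, hcdef]; ring
  have hn1R : (0:ℝ) < (n:ℝ) + 1 := by linarith
  have hcast : ((n+1 : ℕ) : ℝ) = (n:ℝ) + 1 := by push_cast; ring
  have hxn1sq : (x (n+1))^2 = c / ((n:ℝ)+1) := by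
    rw [hxsq (n+1) (by rw [hcast]; linarith), hcast]
  have hxn1lt : x (n+1) < 1 := by
    have h1 : (x (n+1))^2 < 1 := by
      rw [hxn1sq, div_lt_one hn1R]; linarith
    nlinarith [hx0 (n+1)]
  -- monotonicity of x
  have hxmono : ∀ k : ℕ, n+1 ≤ k → x k ≤ x (n+1) := by
    intro k hk
    have hkR : ((n:ℝ)+1) ≤ (k:ℝ) := by
      rw [← hcast]; exact_mod_cast hk
    have hkpos : (0:ℝ) < (k:ℝ) := by linarith
    have hdiv : (N:ℝ)/(k:ℝ) ≤ (N:ℝ)/(((n+1:ℕ)):ℝ) := by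
      rw [hcast, div_le_div_iff₀ hkpos hn1R]
      have hN0 : (0:ℝ) ≤ (N:ℝ) := Nat.cast_nonneg N
      nlinarith
    show z * Real.sqrt ((N:ℝ)/(k:ℝ)) ≤ z * Real.sqrt ((N:ℝ)/((n+1:ℕ):ℝ))
    exact mul_le_mul_of_nonneg_left (Real.sqrt_le_sqrt hdiv) hz0
  set A := θ (n+1) with hAdef
  set s := Real.sqrt (1 - (x (n+1))^2) with hsdef
  have hs2 : s^2 = 1 - (x (n+1))^2 :=
    Real.sq_sqrt (by nlinarith [hx0 (n+1), hxn1lt])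
  have hspos : 0 < s := Real.sqrt_pos.2 (by nlinarith [hx0 (n+1), hxn1lt])
  have hsinA : Real.sin A = s := Real.sin_arccos _
  set w := Complex.exp (2 * Complex.I * (A : ℂ)) with hwdef
  have hwabs : ‖w‖ = 1 := by
    rw [hwdef, Complex.norm_exp]
    simp
  have hw1 : ‖w - 1‖ = 2 * s := by
    have h := auxA A
    rw [← hwdef] at h
    rw [h, hsinA, abs_of_nonneg hspos.le]
  have hwne : w ≠ 1 := by
    intro h
    rw [h] at hw1
    simp at hw1
    linarith
  -- reindex sum
  have hIoc : Finset.Ioc n (n+L) = Finset.Ico (n+1) (n+1+L) := by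
    ext a; simp only [Finset.mem_Ioc, Finset.mem_Ico]; omega
  rw [hIoc, Finset.sum_Ico_eq_sum_range]
  have hLL : n+1+L-(n+1) = L := by omega
  rw [hLL]
  set ε : ℕ → ℝ := fun j => ∑ k ∈ Finset.Ioc (n+1) (n+1+j), (θ k - A) with hεdef
  -- phase decomposition
  have hphase : ∀ j : ℕ, (∑ k ∈ Finset.Ioc n (n+1+j), θ k) = (j+1)*A + ε j := by
    intro j
    have h1 : (∑ k ∈ Finset.Ioc n (n+1), θ k) + (∑ k ∈ Finset.Ioc (n+1) (n+1+j), θ k)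
        = ∑ k ∈ Finset.Ioc n (n+1+j), θ k :=
      Finset.sum_Ioc_consecutive θ (Nat.le_succ n) (Nat.le_add_right _ _)
    rw [← h1, Nat.Ioc_succ_singleton, Finset.sum_singleton]
    have h2 : ∑ k ∈ Finset.Ioc (n+1) (n+1+j), θ k = ε j + j * A := by
      rw [hεdef]
      simp only [Finset.sum_sub_distrib, Finset.sum_const, Nat.card_Ioc]
      have : n+1+j - (n+1) = j := by omega
      rw [this, nsmul_eq_mul]
      ring
    rw [h2, hAdef]
    ring
  -- term decomposition
  have hterm : ∀ j ∈ Finset.range L,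
      Complex.exp (2 * Complex.I * ((∑ k ∈ Finset.Ioc n (n+1+j), θ k : ℝ) : ℂ))
        = w^(j+1) + w^(j+1) * (Complex.exp (2 * Complex.I * ((ε j : ℝ) : ℂ)) - 1) := by
    intro j _
    rw [hphase j]
    have h1 : (2 * Complex.I * ((((j:ℝ)+1)*A + ε j : ℝ) : ℂ))
        = ((j+1 : ℕ) : ℂ) * (2 * Complex.I * (A:ℂ)) + 2 * Complex.I * ((ε j : ℝ) : ℂ) := by
      push_cast; ring
    rw [h1, Complex.exp_add, Complex.exp_nat_mul, ← hwdef]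
    ring
  rw [Finset.sum_congr rfl hterm, Finset.sum_add_distrib]
  -- arccos/arcsin relation
  have hθA : ∀ k : ℕ, θ k - A = Real.arcsin (x (n+1)) - Real.arcsin (x k) := by
    intro k
    show Real.arccos (x k) - Real.arccos (x (n+1)) = _
    rw [Real.arccos_eq_pi_div_two_sub_arcsin, Real.arccos_eq_pi_div_two_sub_arcsin]; ring
  have hεnonneg : ∀ j : ℕ, 0 ≤ ε j := by
    intro j
    apply Finset.sum_nonneg
    intro k hk
    have hk1 : n+1 ≤ k := le_of_lt (Finset.mem_Ioc.1 hk).1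
    rw [hθA k]
    have := Real.monotone_arcsin (hxmono k hk1)
    linarith
  -- per-term bound on θ k - A
  have hw0sq : (z * Real.sqrt (N:ℝ))^2 = c := by
    rw [mul_pow, Real.sq_sqrt (Nat.cast_nonneg N), hcdef]; ring
  have hxw0 : ∀ k : ℕ, x k = (z * Real.sqrt (N:ℝ)) / Real.sqrt (k:ℝ) := by
    intro k
    show z * Real.sqrt ((N:ℝ)/(k:ℝ)) = _
    rw [Real.sqrt_div (Nat.cast_nonneg N)]; ring
  have hper : ∀ j : ℕ, ∀ k ∈ Finset.Ioc (n+1) (n+1+j),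
      θ k - A ≤ (π/2) * ((j:ℝ)/(2*((n:ℝ)+1))) / s := by
    intro j k hk
    obtain ⟨hk1, hk2⟩ := Finset.mem_Ioc.1 hk
    have hk1' : n+1 ≤ k := le_of_lt hk1
    have hkR : ((n:ℝ)+1) ≤ (k:ℝ) := by
      rw [← hcast]; exact_mod_cast hk1'
    have hkR2 : (k:ℝ) ≤ (n:ℝ)+1+(j:ℝ) := by
      have : ((n+1+j:ℕ):ℝ) = (n:ℝ)+1+(j:ℝ) := by push_cast; ring
      rw [← this]; exact_mod_cast hk2
    have h1 := auxB (hx0 k) (hxmono k hk1') hxn1lt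
    rw [← hsdef] at h1
    have h2 : x (n+1) - x k ≤ ((k:ℝ) - ((n:ℝ)+1))/(2*((n:ℝ)+1)) := by
      rw [hxw0 k, hxw0 (n+1), hcast]
      exact auxD (by linarith) hkR (by positivity) (by rw [hw0sq]; linarith)
    have h3 : x (n+1) - x k ≤ (j:ℝ)/(2*((n:ℝ)+1)) := by
      apply le_trans h2
      gcongr
      linarith
    have hAeq : Real.arccos (x k) - Real.arccos (x (n+1)) = θ k - A := rfl
    rw [hAeq] at h1
    apply le_trans h1
    gcongr
  have hεup : ∀ j : ℕ, ε j ≤ (j:ℝ) * ((π/2) * ((j:ℝ)/(2*((n:ℝ)+1))) / s) := by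
    intro j
    have := Finset.sum_le_card_nsmul (Finset.Ioc (n+1) (n+1+j)) _ _ (hper j)
    rw [Nat.card_Ioc] at this
    have hj : n+1+j-(n+1) = j := by omega
    rw [hj, nsmul_eq_mul] at this
    exact this
  -- error sum bound
  have hEper : ∀ j ∈ Finset.range L,
      ‖w^(j+1) * (Complex.exp (2 * Complex.I * ((ε j : ℝ) : ℂ)) - 1)‖
        ≤ π * (L:ℝ)^2/(2*((n:ℝ)+1)*s) := by
    intro j hj
    have hjL : (j:ℝ) ≤ (L:ℝ) := by
      exact_mod_cast le_of_lt (Finset.mem_range.1 hj)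
    rw [norm_mul, norm_pow, hwabs, one_pow, one_mul, auxA]
    have hsin : |Real.sin (ε j)| ≤ ε j := by
      calc |Real.sin (ε j)| ≤ |ε j| := Real.abs_sin_le_abs
      _ = ε j := abs_of_nonneg (hεnonneg j)
    have h4 : 2 * |Real.sin (ε j)| ≤ 2 * ((j:ℝ) * ((π/2) * ((j:ℝ)/(2*((n:ℝ)+1))) / s)) := by
      have := le_trans hsin (hεup j)
      linarith
    apply le_trans h4
    have heq : 2 * ((j:ℝ) * ((π/2) * ((j:ℝ)/(2*((n:ℝ)+1))) / s)) = π * (j:ℝ)^2/(2*((n:ℝ)+1)*s) := by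
      field_simp
    rw [heq]
    gcongr
  have hEsum : ‖∑ j ∈ Finset.range L,
      w^(j+1) * (Complex.exp (2 * Complex.I * ((ε j : ℝ) : ℂ)) - 1)‖
        ≤ (L:ℝ) * (π * (L:ℝ)^2/(2*((n:ℝ)+1)*s)) := by
    calc ‖∑ j ∈ Finset.range L, w^(j+1) * (Complex.exp (2 * Complex.I * ((ε j : ℝ) : ℂ)) - 1)‖
        ≤ ∑ j ∈ Finset.range L, ‖w^(j+1) * (Complex.exp (2 * Complex.I * ((ε j : ℝ) : ℂ)) - 1)‖ :=
          norm_sum_le _ _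
      _ ≤ (L:ℝ) * (π * (L:ℝ)^2/(2*((n:ℝ)+1)*s)) := by
          have := Finset.sum_le_card_nsmul (Finset.range L) _ _ hEper
          rw [Finset.card_range, nsmul_eq_mul] at this
          exact this
  -- geometric sum bound
  have hgeo_eq : ∑ j ∈ Finset.range L, w^(j+1) = w * ((w^L - 1)/(w - 1)) := by
    calc ∑ j ∈ Finset.range L, w^(j+1) = ∑ j ∈ Finset.range L, w * w^j := by
          apply Finset.sum_congr rfl; intro j _; ring
      _ = w * ∑ j ∈ Finset.range L, w^j := (Finset.mul_sum _ _ _).symm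
      _ = w * ((w^L - 1)/(w - 1)) := by rw [geom_sum_eq hwne]
  have hgeo : ‖∑ j ∈ Finset.range L, w^(j+1)‖ ≤ 1/s := by
    rw [hgeo_eq, norm_mul, norm_div, hwabs, hw1, one_mul]
    have h2 : ‖w^L - 1‖ ≤ 2 := by
      calc ‖w^L - 1‖ = ‖w^L - 1‖ := rfl
        _ ≤ ‖w^L‖ + ‖(1:ℂ)‖ := norm_sub_le _ _
        _ = ‖w^L‖ + 1 := by rw [norm_one]
        _ = 2 := by rw [norm_pow, hwabs, one_pow]; norm_num
    calc ‖w^L - 1‖/(2*s) ≤ 2/(2*s) := by gcongr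
      _ = 1/s := by rw [div_eq_div_iff (by positivity) (by positivity)]; ring
  -- final arithmetic
  have hncpos : (0:ℝ) < (n:ℝ) - c := by linarith
  have hsqnc : 0 < Real.sqrt ((n:ℝ)-c) := Real.sqrt_pos.2 hncpos
  have ht1 : c/((n:ℝ)+1) < 1 := by rw [div_lt_one hn1R]; linarith
  have ht0 : 0 ≤ c/((n:ℝ)+1) := by positivity
  have hq : c/((n:ℝ)+1)*((n:ℝ)+1) = c := div_mul_cancel₀ _ (by linarith)
  have key : Real.sqrt ((n:ℝ)-c) ≤ 2*Real.sqrt (n:ℝ)*s := by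
    have h4 : ((n:ℝ) - c) ≤ (2*Real.sqrt (n:ℝ)*s)^2 := by
      have h5 : (2*Real.sqrt (n:ℝ)*s)^2 = 4*(n:ℝ)*(1 - c/((n:ℝ)+1)) := by
        rw [mul_pow, mul_pow, hs2, hxn1sq, Real.sq_sqrt hn0.le]; ring
      rw [h5]
      have h6 : 4*(n:ℝ)*(1 - c/((n:ℝ)+1)) - ((n:ℝ) - c)
          = 3*(n:ℝ)*(1 - c/((n:ℝ)+1)) + c/((n:ℝ)+1) := by
        have hne : ((n:ℝ)+1) ≠ 0 := by linarith
        field_simp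
        ring
      linarith [h6, ht0, mul_nonneg (by linarith : (0:ℝ) ≤ 3*(n:ℝ))
        (by linarith : (0:ℝ) ≤ 1 - c/((n:ℝ)+1))]
    calc Real.sqrt ((n:ℝ)-c) ≤ Real.sqrt ((2*Real.sqrt (n:ℝ)*s)^2) := Real.sqrt_le_sqrt h4
      _ = 2*Real.sqrt (n:ℝ)*s := Real.sqrt_sq (by positivity)
  have h1s : 1/s ≤ 2*Real.sqrt (n:ℝ)*(1/Real.sqrt ((n:ℝ)-c)) := by
    rw [mul_one_div, div_le_div_iff₀ hspos hsqnc]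
    linarith
  have h2s : (L:ℝ) * (π * (L:ℝ)^2/(2*((n:ℝ)+1)*s)) ≤ (2*(L:ℝ)^3/(n:ℝ))*(1/s) := by
    have heq2 : (L:ℝ)*(π*(L:ℝ)^2/(2*((n:ℝ)+1)*s)) = (π*(L:ℝ)^3/(2*((n:ℝ)+1)))*(1/s) := by
      field_simp
    rw [heq2]
    have hcoef : π*(L:ℝ)^3/(2*((n:ℝ)+1)) ≤ 2*(L:ℝ)^3/(n:ℝ) := by
      rw [div_le_div_iff₀ (by linarith) (by linarith)]
      have h7 : π*((L:ℝ)^3*(n:ℝ)) ≤ 4*((L:ℝ)^3*(n:ℝ)) :=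
        mul_le_mul_of_nonneg_right Real.pi_le_four (by positivity)
      nlinarith [h7, pow_nonneg (Nat.cast_nonneg L : (0:ℝ) ≤ (L:ℝ)) 3]
    exact mul_le_mul_of_nonneg_right hcoef (by positivity)
  have hD0 : 0 ≤ Real.sqrt (n:ℝ)*(1/Real.sqrt ((n:ℝ)-c)) := by positivity
  have hq0 : 0 ≤ (L:ℝ)^3/(n:ℝ) := by positivity
  calc ‖(∑ j ∈ Finset.range L, w^(j+1)) + ∑ j ∈ Finset.range L,
        w^(j+1) * (Complex.exp (2 * Complex.I * ((ε j : ℝ) : ℂ)) - 1)‖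
      ≤ ‖∑ j ∈ Finset.range L, w^(j+1)‖ + ‖∑ j ∈ Finset.range L,
        w^(j+1) * (Complex.exp (2 * Complex.I * ((ε j : ℝ) : ℂ)) - 1)‖ := norm_add_le _ _
    _ ≤ 1/s + (L:ℝ) * (π * (L:ℝ)^2/(2*((n:ℝ)+1)*s)) := add_le_add hgeo hEsum
    _ ≤ 2*Real.sqrt (n:ℝ)*(1/Real.sqrt ((n:ℝ)-c))
        + (2*(L:ℝ)^3/(n:ℝ))*(2*Real.sqrt (n:ℝ)*(1/Real.sqrt ((n:ℝ)-c))) := by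
        refine add_le_add h1s (le_trans h2s ?_)
        exact mul_le_mul_of_nonneg_left h1s (by positivity)
    _ ≤ 8 * Real.sqrt (n:ℝ) * (1/Real.sqrt ((n:ℝ)-c)) * (1 + (L:ℝ)^3/(n:ℝ)) := by
        have h8 : 0 ≤ 6*(Real.sqrt (n:ℝ)*(1/Real.sqrt ((n:ℝ)-c)))
            + 4*(Real.sqrt (n:ℝ)*(1/Real.sqrt ((n:ℝ)-c))*((L:ℝ)^3/(n:ℝ))) := by positivity
        ring_nf
        ring_nf at h8
        linarith [h8]
end

section
/- Let b_{j,n} := ϑ_{j,n}(z) − (j−n)·θ_{n+1}(z) with ϑ_{j,n}(z) = ∑_{k=n+1}^{j} θ_k(z). For z ∈ [0,1), N ∈ ℕ, n > N z², and j ≥ n, one has 0 ≤ b_{j,n} ≤ (j−n)(j−n−1)/(4(n+1) sin θ_{n+1}(z)). -/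
set_option maxHeartbeats 1000000

open Real Finset

private lemma arccos_anti' {x y : ℝ} (h : x ≤ y) : Real.arccos y ≤ Real.arccos x := by
  unfold Real.arccos
  have := Real.monotone_arcsin h
  linarith

/-- tangent line bound for cos: for `0 ≤ a ≤ b ≤ π/2`, `(b-a) sin a ≤ cos a - cos b`. -/
private lemma tangent_cos' {a b : ℝ} (ha : 0 ≤ a) (hab : a ≤ b) (hb : b ≤ π/2) :
    (b - a) * Real.sin a ≤ Real.cos a - Real.cos b := by
  have h1 : ∫ _x in a..b, Real.sin a ≤ ∫ x in a..b, Real.sin x := by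
    apply intervalIntegral.integral_mono_on hab (intervalIntegrable_const)
      (Real.continuous_sin.intervalIntegrable a b)
    intro t ht
    have h2 : -(π/2) ≤ a := by linarith [Real.pi_pos]
    exact Real.strictMonoOn_sin.monotoneOn ⟨h2, by linarith [ht.1]⟩
      ⟨by linarith [ht.1], by linarith [ht.2]⟩ ht.1
  rw [integral_sin] at h1
  simpa using h1

private lemma gauss_sum' (m : ℕ) : ∑ i ∈ Finset.range m, (i:ℝ) = (m:ℝ)*((m:ℝ)-1)/2 := by
  induction m with
  | zero => simp
  | succ m ih => rw [Finset.sum_range_succ, ih]; push_cast; ring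

/-- Let `b_{j,n} = ϑ_{j,n}(z) − (j−n) θ_{n+1}(z)` where
`ϑ_{j,n}(z) = ∑_{k=n+1}^{j} θ_k(z)` and `θ_k(z) = arccos (z √(N/k))`.
For `z ∈ [0,1)`, `n > N z²` and `j ≥ n`:
`0 ≤ b_{j,n} ≤ (j−n)(j−n−1) / (4 (n+1) sin θ_{n+1}(z))`. -/
theorem stmt8 (N : ℕ) (z : ℝ) (hz0 : 0 ≤ z) (hz1 : z < 1) (n : ℕ)
    (hn : (N : ℝ) * z ^ 2 < n) (j : ℕ) (hj : n ≤ j) :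
    0 ≤ (∑ k ∈ Finset.Ioc n j, Real.arccos (z * Real.sqrt ((N : ℝ) / k))) -
        ((j - n : ℕ) : ℝ) * Real.arccos (z * Real.sqrt ((N : ℝ) / (n + 1))) ∧
      (∑ k ∈ Finset.Ioc n j, Real.arccos (z * Real.sqrt ((N : ℝ) / k))) -
          ((j - n : ℕ) : ℝ) * Real.arccos (z * Real.sqrt ((N : ℝ) / (n + 1))) ≤
        ((j - n : ℕ) : ℝ) * (((j - n : ℕ) : ℝ) - 1) /
          (4 * ((n : ℝ) + 1) *
            Real.sin (Real.arccos (z * Real.sqrt ((N : ℝ) / (n + 1))))) := by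
  set x : ℕ → ℝ := fun k => z * Real.sqrt ((N : ℝ) / k) with hx
  set θ : ℕ → ℝ := fun k => Real.arccos (x k) with hθ
  have hθeq : Real.arccos (z * Real.sqrt ((N : ℝ) / ((n:ℝ) + 1))) = θ (n+1) := by
    rw [hθ, hx]; push_cast; ring_nf
  rw [hθeq]
  have hxnonneg : ∀ k, 0 ≤ x k := fun k => mul_nonneg hz0 (Real.sqrt_nonneg _)
  have hxsq : ∀ k : ℕ, 0 < k → (x k) ^ 2 = (N : ℝ) * z ^ 2 / k := by
    intro k hk
    have h0 : (0:ℝ) ≤ (N : ℝ) / k := by positivity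
    rw [hx]; rw [mul_pow, Real.sq_sqrt h0]; ring
  have hn1pos : (0:ℝ) < (n:ℝ) + 1 := by positivity
  have hxn1lt : x (n+1) < 1 := by
    have h2 : (x (n+1)) ^ 2 < 1 := by
      rw [hxsq (n+1) (Nat.succ_pos n)]
      rw [div_lt_one (by push_cast; linarith)]
      push_cast; linarith
    nlinarith [hxnonneg (n+1)]
  have hxanti : ∀ k : ℕ, n + 1 ≤ k → x k ≤ x (n+1) := by
    intro k hk
    have hk' : ((n:ℝ)+1) ≤ (k:ℝ) := by exact_mod_cast hk
    simp only [hx]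
    gcongr <;> first
      | exact Nat.cast_nonneg N
      | positivity
      | exact_mod_cast hk
  have hθmono : ∀ k : ℕ, n + 1 ≤ k → θ (n+1) ≤ θ k := fun k hk => arccos_anti' (hxanti k hk)
  set S : ℝ := Real.sin (θ (n+1)) with hS
  have hx1sqlt : (x (n+1))^2 < 1 := by nlinarith [hxnonneg (n+1)]
  have hSpos : 0 < S := by
    rw [hS, hθ, Real.sin_arccos]
    have h1 : 0 < 1 - (x (n+1))^2 := by linarith
    exact Real.sqrt_pos.mpr h1
  have hcard : (Finset.Ioc n j).card = j - n := Nat.card_Ioc n j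
  have hlow : ((j - n : ℕ) : ℝ) * θ (n+1) ≤ ∑ k ∈ Finset.Ioc n j, θ k := by
    calc ((j - n : ℕ) : ℝ) * θ (n+1)
        = ∑ _k ∈ Finset.Ioc n j, θ (n+1) := by rw [Finset.sum_const, hcard]; ring
      _ ≤ ∑ k ∈ Finset.Ioc n j, θ k :=
          Finset.sum_le_sum fun k hk => hθmono k (Finset.mem_Ioc.mp hk).1
  refine ⟨by linarith, ?_⟩
  -- per-term estimate
  have hstep : ∀ k : ℕ, n + 1 ≤ k →
      θ k - θ (n+1) ≤ ((k:ℝ) - ((n:ℝ)+1)) / (2 * ((n:ℝ)+1) * S) := by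
    intro k hk
    have hkpos : (0:ℝ) < k := by
      have : 0 < k := lt_of_lt_of_le (Nat.succ_pos n) hk
      exact_mod_cast this
    have hθn1le : θ (n+1) ≤ θ k := hθmono k hk
    have hθk_le : θ k ≤ π/2 := by
      rw [hθ]; exact Real.arccos_le_pi_div_two.mpr (hxnonneg k)
    have hθnonneg : 0 ≤ θ (n+1) := Real.arccos_nonneg _
    have hx1le : x (n+1) ≤ 1 := le_of_lt hxn1lt
    have hxkle : x k ≤ 1 := le_trans (hxanti k hk) hx1le
    have hcosn1 : Real.cos (θ (n+1)) = x (n+1) :=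
      Real.cos_arccos (by linarith [hxnonneg (n+1)]) hx1le
    have hcosk : Real.cos (θ k) = x k :=
      Real.cos_arccos (by linarith [hxnonneg k]) hxkle
    have htan := tangent_cos' hθnonneg hθn1le hθk_le
    rw [hcosn1, hcosk] at htan
    -- bound x(n+1) - x k
    have hxdiff : x (n+1) - x k ≤ ((k:ℝ) - ((n:ℝ)+1)) / (2 * ((n:ℝ)+1)) := by
      set s : ℝ := Real.sqrt ((n:ℝ)+1) with hs
      set t : ℝ := Real.sqrt (k:ℝ) with ht
      have hs2 : s^2 = (n:ℝ)+1 := Real.sq_sqrt (by positivity)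
      have ht2 : t^2 = (k:ℝ) := Real.sq_sqrt (le_of_lt hkpos)
      have hspos : 0 < s := Real.sqrt_pos.mpr hn1pos
      have htpos : 0 < t := Real.sqrt_pos.mpr hkpos
      have hst : s ≤ t := by
        rw [hs, ht]
        apply Real.sqrt_le_sqrt
        exact_mod_cast hk
      set c : ℝ := z * Real.sqrt (N:ℝ) with hc
      have hcnonneg : 0 ≤ c := mul_nonneg hz0 (Real.sqrt_nonneg _)
      have hc2 : c^2 = (N:ℝ) * z^2 := by
        rw [hc, mul_pow, Real.sq_sqrt (Nat.cast_nonneg N)]; ring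
      have hcs : c ≤ s := by nlinarith
      have hxn1 : x (n+1) = c / s := by
        simp only [hx, hc, hs]
        push_cast
        rw [Real.sqrt_div (Nat.cast_nonneg N), mul_div_assoc]
      have hxk : x k = c / t := by
        simp only [hx, hc, ht]
        rw [Real.sqrt_div (Nat.cast_nonneg N), mul_div_assoc]
      rw [hxn1, hxk, ← hs2, ← ht2]
      rw [div_sub_div _ _ hspos.ne' htpos.ne',
        div_le_div_iff₀ (by positivity) (by positivity)]
      have key : 0 ≤ (t - s) * (t * (t + s) - 2 * s * c) := by
        apply mul_nonneg (by linarith)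
        have e1 : 2 * s * c ≤ 2 * s * s := by nlinarith
        have e2 : s * s ≤ t * s := by nlinarith
        have e3 : t * s ≤ t * t := by nlinarith
        nlinarith
      have expand : (t ^ 2 - s ^ 2) * (s * t) - (c * t - c * s) * (2 * s ^ 2)
          = s * ((t - s) * (t * (t + s) - 2 * s * c)) := by ring
      nlinarith [mul_nonneg hspos.le key]
    have h1 : (θ k - θ (n+1)) * S ≤ ((k:ℝ) - ((n:ℝ)+1)) / (2 * ((n:ℝ)+1)) :=
      le_trans htan hxdiff
    rw [le_div_iff₀ (by positivity)]
    have h2 := mul_le_mul_of_nonneg_right h1 (by positivity : (0:ℝ) ≤ 2 * ((n:ℝ)+1))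
    rw [div_mul_cancel₀ _ (by positivity : (0:ℝ) < 2 * ((n:ℝ)+1)).ne'] at h2
    nlinarith [h2]
  -- sum up
  have hsum1 : (∑ k ∈ Finset.Ioc n j, θ k) - ((j - n : ℕ) : ℝ) * θ (n+1)
      = ∑ k ∈ Finset.Ioc n j, (θ k - θ (n+1)) := by
    rw [Finset.sum_sub_distrib, Finset.sum_const, hcard]; ring
  have hsum2 : ∑ k ∈ Finset.Ioc n j, (θ k - θ (n+1))
      ≤ ∑ k ∈ Finset.Ioc n j, ((k:ℝ) - ((n:ℝ)+1)) / (2 * ((n:ℝ)+1) * S) :=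
    Finset.sum_le_sum fun k hk => hstep k (Finset.mem_Ioc.mp hk).1
  have hsum3 : ∑ k ∈ Finset.Ioc n j, ((k:ℝ) - ((n:ℝ)+1))
      = ((j-n:ℕ):ℝ) * (((j-n:ℕ):ℝ) - 1) / 2 := by
    rw [← Finset.Ico_add_one_add_one_eq_Ioc, Finset.sum_Ico_eq_sum_range]
    have hm : j + 1 - (n + 1) = j - n := by omega
    rw [hm]
    have : ∀ i ∈ Finset.range (j - n), ((n + 1 + i : ℕ):ℝ) - ((n:ℝ)+1) = (i:ℝ) := by
      intro i _; push_cast; ring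
    rw [Finset.sum_congr rfl this, gauss_sum']
  have hsum4 : ∑ k ∈ Finset.Ioc n j, ((k:ℝ) - ((n:ℝ)+1)) / (2 * ((n:ℝ)+1) * S)
      = ((j-n:ℕ):ℝ) * (((j-n:ℕ):ℝ) - 1) / (4 * ((n:ℝ)+1) * S) := by
    rw [← Finset.sum_div, hsum3, div_div]
    congr 1
    ring
  rw [hsum1]
  calc ∑ k ∈ Finset.Ioc n j, (θ k - θ (n+1))
      ≤ ∑ k ∈ Finset.Ioc n j, ((k:ℝ) - ((n:ℝ)+1)) / (2 * ((n:ℝ)+1) * S) := hsum2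
    _ = ((j-n:ℕ):ℝ) * (((j-n:ℕ):ℝ) - 1) / (4 * ((n:ℝ)+1) * S) := hsum4
end
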